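/- Suppose λ̃ ≥ 4^n, 0 ≤ γ̃ ≤ λ̃^{−n}, G is a graph with n ≥ 3 vertices, and h ≤ n is a positive integer. If G has an independent set of size h then Z_{1,γ̃,λ̃}(G) ≥ λ̃^h; if G has no independent set of size h then Z_{1,γ̃,λ̃}(G) ≤ 2^n · λ̃^{h−1} ≤ 2^{−n} λ̃^h. -/
import Mathlib


open scoped Classical

noncomputable instance {V : Type*} [Fintype V] (G : SimpleGraph V) : Fintype G.edgeSet :=
  Fintype.ofFinite _

/-- Number of edges whose both endpoints have spin `0` (i.e. `false`). -/
noncomputable def numB {V : Type*} [Fintype V] (G : SimpleGraph V) (σ : V → Bool) : ℕ :=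
  (G.edgeFinset.filter (fun e => ∀ v ∈ e, σ v = false)).card

/-- Number of edges whose both endpoints have spin `1` (i.e. `true`). -/
noncomputable def numC {V : Type*} [Fintype V] (G : SimpleGraph V) (σ : V → Bool) : ℕ :=
  (G.edgeFinset.filter (fun e => ∀ v ∈ e, σ v = true)).card

/-- Number of vertices with spin `1`. -/
noncomputable def numL {V : Type*} [Fintype V] (σ : V → Bool) : ℕ :=
  (Finset.univ.filter (fun v => σ v = true)).card

/-- The two-spin partition function `Z_{β,γ,λ}(G)`. -/
noncomputable def partitionFn {V : Type*} [Fintype V] (G : SimpleGraph V)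
    (β γ lam : ℝ) : ℝ :=
  ∑ σ : V → Bool, β ^ numB G σ * γ ^ numC G σ * lam ^ numL σ

theorem partitionFn_independent_set_gap {V : Type*} [Fintype V] (G : SimpleGraph V)
    (n : ℕ) (hn : Fintype.card V = n) (hn3 : 3 ≤ n)
    (h : ℕ) (hh : 0 < h) (hhn : h ≤ n)
    (tγ tlam : ℝ) (htlam : (4 : ℝ) ^ n ≤ tlam)
    (htγ0 : 0 ≤ tγ) (htγ : tγ ≤ (tlam ^ n)⁻¹) :
    ((∃ s : Finset V, s.card = h ∧ ∀ u ∈ s, ∀ v ∈ s, ¬G.Adj u v) →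
        tlam ^ h ≤ partitionFn G 1 tγ tlam) ∧
      ((¬∃ s : Finset V, s.card = h ∧ ∀ u ∈ s, ∀ v ∈ s, ¬G.Adj u v) →
        partitionFn G 1 tγ tlam ≤ (2 : ℝ) ^ n * tlam ^ (h - 1) ∧
          (2 : ℝ) ^ n * tlam ^ (h - 1) ≤ ((2 : ℝ) ^ n)⁻¹ * tlam ^ h) := by
  have hlam1 : (1:ℝ) ≤ tlam := le_trans (one_le_pow₀ (by norm_num)) htlam
  have hlam0 : (0:ℝ) < tlam := lt_of_lt_of_le one_pos hlam1
  have htγ1 : tγ ≤ 1 := htγ.trans (by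
    rw [inv_le_one₀ (by positivity)]
    exact one_le_pow₀ hlam1)
  have hcard : Fintype.card (V → Bool) = 2 ^ n := by
    simp [hn]
  constructor
  · rintro ⟨s, hs, hind⟩
    set σ₀ : V → Bool := fun v => decide (v ∈ s) with hσ₀
    have hC : numC G σ₀ = 0 := by
      rw [numC, Finset.card_eq_zero, Finset.filter_eq_empty_iff]
      intro e he
      rw [SimpleGraph.mem_edgeFinset] at he
      induction e using Sym2.ind with
      | _ u v =>
        intro hall
        have hu := hall u (by simp)
        have hv := hall v (by simp)
        simp only [σ₀, decide_eq_true_eq] at hu hv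
        exact hind u hu v hv he
    have hL : numL σ₀ = h := by
      rw [numL, ← hs]
      congr 1
      ext v; simp [σ₀]
    calc tlam ^ h = 1 ^ numB G σ₀ * tγ ^ numC G σ₀ * tlam ^ numL σ₀ := by
          rw [hC, hL]; simp
      _ ≤ partitionFn G 1 tγ tlam := by
          rw [partitionFn]
          exact Finset.single_le_sum
            (f := fun σ : V → Bool => (1:ℝ) ^ numB G σ * tγ ^ numC G σ * tlam ^ numL σ)
            (fun σ _ => by positivity) (Finset.mem_univ σ₀)
  · intro hno
    have hub : ∀ σ : V → Bool,
        (1:ℝ) ^ numB G σ * tγ ^ numC G σ * tlam ^ numL σ ≤ tlam ^ (h-1) := by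
      intro σ
      rw [one_pow, one_mul]
      by_cases hc : numC G σ = 0
      · rw [hc, pow_zero, one_mul]
        have hℓ : numL σ ≤ h - 1 := by
          by_contra hlt
          have hh' : h ≤ numL σ := by omega
          obtain ⟨t, hts, htc⟩ := Finset.exists_subset_card_eq hh'
          apply hno
          refine ⟨t, htc, ?_⟩
          intro u hu v hv hadj
          have h1 : σ u = true := by have := hts hu; simpa using this
          have h2 : σ v = true := by have := hts hv; simpa using this
          have hmem : s(u,v) ∈ G.edgeFinset.filter (fun e => ∀ w ∈ e, σ w = true) := by
            rw [Finset.mem_filter, SimpleGraph.mem_edgeFinset]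
            refine ⟨hadj, ?_⟩
            intro w hw
            rw [Sym2.mem_iff] at hw
            rcases hw with rfl | rfl <;> assumption
          have : 0 < numC G σ := Finset.card_pos.mpr ⟨_, hmem⟩
          omega
        exact pow_le_pow_right₀ hlam1 hℓ
      · have h1 : tγ ^ numC G σ ≤ (tlam ^ n)⁻¹ :=
          calc tγ ^ numC G σ ≤ tγ ^ 1 := pow_le_pow_of_le_one htγ0 htγ1 (by omega)
            _ = tγ := pow_one _
            _ ≤ (tlam ^ n)⁻¹ := htγ
        have hℓn : numL σ ≤ n := by
          rw [← hn, ← Finset.card_univ]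
          exact Finset.card_filter_le _ _
        have h2 : tlam ^ numL σ ≤ tlam ^ n := pow_le_pow_right₀ hlam1 hℓn
        calc tγ ^ numC G σ * tlam ^ numL σ ≤ (tlam ^ n)⁻¹ * tlam ^ n :=
            mul_le_mul h1 h2 (by positivity) (by positivity)
          _ = 1 := inv_mul_cancel₀ (by positivity)
          _ ≤ tlam ^ (h-1) := one_le_pow₀ hlam1
    constructor
    · calc partitionFn G 1 tγ tlam ≤ ∑ _σ : V → Bool, tlam ^ (h-1) := by
            rw [partitionFn]
            exact Finset.sum_le_sum (fun σ _ => hub σ)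
        _ = (2:ℝ)^n * tlam^(h-1) := by
            rw [Finset.sum_const, Finset.card_univ, hcard, nsmul_eq_mul]
            push_cast; ring
    · rw [le_inv_mul_iff₀ (by positivity : (0:ℝ) < 2 ^ n)]
      calc (2:ℝ)^n * ((2:ℝ)^n * tlam^(h-1)) = 4^n * tlam^(h-1) := by
            rw [← mul_assoc, ← mul_pow]; norm_num
        _ ≤ tlam * tlam^(h-1) := by
            apply mul_le_mul_of_nonneg_right htlam (by positivity)
        _ = tlam ^ h := by
            rw [← pow_succ']
            congr 1
            omega
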